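/- Let (M,F) be a Finsler manifold, k ≥ 0 a fixed constant, and suppose the k-nullity space is locally constant on an open subset U of M. Then every integral manifold N of the k-nullity distribution in U, equipped with the induced Finsler structure F̃, has constant flag curvature equal to k: its hh-curvature satisfies R̃(X,v)v = k(F̃² X − g̃(X,v) v) for every section X, equivalently K(z, P(v,X)) = k for every flag. -/
import Mathlib


/-!
Abstract framework for a Finsler manifold `(M, F)` with its Cartan connection,
in the pulled-back bundle formalism of Akbar-Zadeh: `TM₀` is the slit tangent
bundle, `π*TM → TM₀` the pulled-back tangent bundle with fibres `Tan (π z)`,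
`ϱ = π_*`, `μ(Xh) = ∇_Xh v`, `TTM₀ = HTM ⊕ VTM`.
-/

noncomputable section

open Function Set

variable (M : Type*) [TopologicalSpace M] (TM0 : Type*) [TopologicalSpace TM0]
  (Tan : M → Type*) [∀ x, AddCommGroup (Tan x)] [∀ x, Module ℝ (Tan x)]
  (TTan : TM0 → Type*) [∀ z, AddCommGroup (TTan z)] [∀ z, Module ℝ (TTan z)]

/-- The data of a Finsler manifold `(M,F)` together with its Cartan connection
on the pulled-back bundle `π*TM → TM₀`, its Berwald connection, curvature
operators, and geodesics.  `Tan x` plays the role of `T_x M` and `TTan z` of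
`T_z TM₀`. -/
structure FinslerCartan where
  /-- dimension of `M` -/
  n : ℕ
  /-- `M` is connected -/
  connectedM : ConnectedSpace M
  /-- the projection `π : TM₀ → M` of the slit tangent bundle -/
  π : TM0 → M
  π_surj : Function.Surjective π
  π_cont : Continuous π
  tanDim : ∀ x, Module.finrank ℝ (Tan x) = n
  /-- the Finsler function `F` on `TM₀` -/
  F : TM0 → ℝ
  F_pos : ∀ z, 0 < F z
  /-- the fundamental tensor `g_z` on the fibre `T_{π z}M` of `π*TM`;
  positive definiteness encodes strong convexity of `F` -/
  g : ∀ z, Tan (π z) →ₗ[ℝ] Tan (π z) →ₗ[ℝ] ℝ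
  g_symm : ∀ z X Y, g z X Y = g z Y X
  g_posdef : ∀ z (X : Tan (π z)), X ≠ 0 → 0 < g z X X
  /-- the canonical section `v` of `π*TM` -/
  canSec : ∀ z, Tan (π z)
  canSec_ne : ∀ z, canSec z ≠ 0
  g_canSec : ∀ z, g z (canSec z) (canSec z) = (F z) ^ 2
  /-- the canonical map `ϱ = π_* : T_z TM₀ → T_{π z} M` -/
  ρ : ∀ z, TTan z →ₗ[ℝ] Tan (π z)
  /-- the map `μ(Xh) = ∇_Xh v` -/
  μ : ∀ z, TTan z →ₗ[ℝ] Tan (π z)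
  /-- the horizontal subbundle `HTM` determined by the (regular) Cartan connection -/
  Hor : ∀ z, Submodule ℝ (TTan z)
  /-- the vertical subbundle `VTM = ker π_*` -/
  Ver : ∀ z, Submodule ℝ (TTan z)
  hor_ver_compl : ∀ z, IsCompl (Hor z) (Ver z)
  ver_eq_ker_ρ : ∀ z, Ver z = LinearMap.ker (ρ z)
  hor_eq_ker_μ : ∀ z, Hor z = LinearMap.ker (μ z)
  /-- horizontal projection -/
  Hp : ∀ z, TTan z →ₗ[ℝ] TTan z
  /-- vertical projection -/
  Vp : ∀ z, TTan z →ₗ[ℝ] TTan z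
  Hp_mem : ∀ z w, Hp z w ∈ Hor z
  Vp_mem : ∀ z w, Vp z w ∈ Ver z
  Hp_add_Vp : ∀ z w, Hp z w + Vp z w = w
  Hp_hor : ∀ z, ∀ w ∈ Hor z, Hp z w = w
  Vp_ver : ∀ z, ∀ w ∈ Ver z, Vp z w = w
  /-- horizontal lift, the inverse of `ϱ` on horizontal vectors -/
  hlift : ∀ z, Tan (π z) →ₗ[ℝ] TTan z
  hlift_mem : ∀ z X, hlift z X ∈ Hor z
  ρ_hlift : ∀ z X, ρ z (hlift z X) = X
  hlift_ρ : ∀ z, ∀ w ∈ Hor z, hlift z (ρ z w) = w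
  /-- vertical lift, the inverse of `μ` on vertical vectors (regularity of `∇`) -/
  vlift : ∀ z, Tan (π z) →ₗ[ℝ] TTan z
  vlift_mem : ∀ z X, vlift z X ∈ Ver z
  μ_vlift : ∀ z X, μ z (vlift z X) = X
  vlift_μ : ∀ z, ∀ w ∈ Ver z, vlift z (μ z w) = w
  /-- Lie bracket of vector fields on `TM₀` -/
  bracket : (∀ z, TTan z) → (∀ z, TTan z) → (∀ z, TTan z)
  /-- Lie bracket of vector fields on `M` -/
  bracketM : (∀ x, Tan x) → (∀ x, Tan x) → (∀ x, Tan x)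
  /-- directional derivative of functions on `TM₀` along vector fields -/
  dirDeriv : (∀ z, TTan z) → (TM0 → ℝ) → (TM0 → ℝ)
  /-- the Cartan covariant derivative `∇` on sections of `π*TM` -/
  cov : (∀ z, TTan z) → (∀ z, Tan (π z)) → (∀ z, Tan (π z))
  /-- `μ(Xh) = ∇_Xh v` -/
  μ_spec : ∀ (Xh : ∀ z, TTan z) z, μ z (Xh z) = cov Xh canSec z
  /-- metric compatibility `∇ g = 0` -/
  cov_metric : ∀ (Xh : ∀ z, TTan z) (Y Z : ∀ z, Tan (π z)) z,
    dirDeriv Xh (fun w => g w (Y w) (Z w)) z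
      = g z (cov Xh Y z) (Z z) + g z (Y z) (cov Xh Z z)
  /-- the horizontal torsion `S` of the Cartan connection vanishes -/
  hor_torsion_free : ∀ (Xh Yh : ∀ z, TTan z), (∀ z, Xh z ∈ Hor z) → (∀ z, Yh z ∈ Hor z) →
    ∀ z, cov Xh (fun w => ρ w (Yh w)) z - cov Yh (fun w => ρ w (Xh w)) z
      - ρ z (bracket Xh Yh z) = 0
  /-- the Cartan (second) torsion tensor `T`, as a tensor on `π*TM` -/
  CartanT : ∀ z, Tan (π z) →ₗ[ℝ] Tan (π z) →ₗ[ℝ] Tan (π z)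
  CartanT_symm : ∀ z X Y, CartanT z X Y = CartanT z Y X
  /-- total symmetry of the Cartan tensor: `g(T(X,Y),W) = g(T(X,W),Y)` -/
  CartanT_sym3 : ∀ z X Y W, g z (CartanT z X Y) W = g z (CartanT z X W) Y
  /-- `T(Ẋ, Y) = τ(VXh, HYh)`: the second torsion tensor comes from the torsion
  `τ(Xh,Yh) = ∇_Xh Y − ∇_Yh X − ϱ[Xh,Yh]` of the Cartan connection -/
  CartanT_spec : ∀ (Xh Yh : ∀ z, TTan z) z,
    cov (fun w => Vp w (Xh w)) (fun w => ρ w (Hp w (Yh w))) z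
      - cov (fun w => Hp w (Yh w)) (fun w => ρ w (Vp w (Xh w))) z
      - ρ z (bracket (fun w => Vp w (Xh w)) (fun w => Hp w (Yh w)) z)
      = CartanT z (μ z (Xh z)) (ρ z (Yh z))
  /-- the curvature operator `Ω` of the Cartan connection, pointwise -/
  curv : ∀ z, TTan z →ₗ[ℝ] TTan z →ₗ[ℝ] Tan (π z) →ₗ[ℝ] Tan (π z)
  /-- `Ω(Xh,Yh)Z = ∇_Xh ∇_Yh Z − ∇_Yh ∇_Xh Z − ∇_{[Xh,Yh]} Z` (tensoriality) -/
  curv_spec : ∀ (Xh Yh : ∀ z, TTan z) (Z : ∀ z, Tan (π z)) z,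
    curv z (Xh z) (Yh z) (Z z)
      = cov Xh (cov Yh Z) z - cov Yh (cov Xh Z) z - cov (bracket Xh Yh) Z z
  /-- `g(Ω(Xh,Yh)Z,W) = −g(Ω(Xh,Yh)W,Z)` -/
  curv_antisymm : ∀ z (a b : TTan z) Z W,
    g z (curv z a b Z) W = - g z (curv z a b W) Z
  /-- the connection induced by `∇` on `T TM₀ = HTM ⊕ VTM` via `ϱ` and `μ` -/
  covTT : (∀ z, TTan z) → (∀ z, TTan z) → (∀ z, TTan z)
  covTT_ρ : ∀ (Zh Xh : ∀ z, TTan z) z,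
    ρ z (covTT Zh Xh z) = cov Zh (fun w => ρ w (Xh w)) z
  covTT_μ : ∀ (Zh Xh : ∀ z, TTan z) z,
    μ z (covTT Zh Xh z) = cov Zh (fun w => μ w (Xh w)) z
  /-- the canonical geodesic spray `v̂` of `F` -/
  spray : ∀ z, TTan z
  spray_hor : ∀ z, spray z ∈ Hor z
  spray_ρ : ∀ z, ρ z (spray z) = canSec z
  /-- the Berwald connection `D` -/
  covB : (∀ z, TTan z) → (∀ z, Tan (π z)) → (∀ z, Tan (π z))
  /-- `D_{HXh} Y = ∇_{HXh} Y + (∇_v̂ T)(X, Y)` -/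
  covB_hor : ∀ (Xh : ∀ z, TTan z) (Y : ∀ z, Tan (π z)), (∀ z, Xh z ∈ Hor z) → ∀ z,
    covB Xh Y z = cov Xh Y z
      + (cov spray (fun w => CartanT w (ρ w (Xh w)) (Y w)) z
         - CartanT z (cov spray (fun w => ρ w (Xh w)) z) (Y z)
         - CartanT z (ρ z (Xh z)) (cov spray Y z))
  /-- `∇` and `D` have the same geodesic spray: `∇_Xh v = D_Xh v` -/
  covB_canSec : ∀ (Xh : ∀ z, TTan z) z, covB Xh canSec z = cov Xh canSec z
  /-- the curvature operator of the Berwald connection, pointwise -/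
  curvB : ∀ z, TTan z →ₗ[ℝ] TTan z →ₗ[ℝ] Tan (π z) →ₗ[ℝ] Tan (π z)
  curvB_spec : ∀ (Xh Yh : ∀ z, TTan z) (Z : ∀ z, Tan (π z)) z,
    curvB z (Xh z) (Yh z) (Z z)
      = covB Xh (covB Yh Z) z - covB Yh (covB Xh Z) z - covB (bracket Xh Yh) Z z
  /-- `γ` is a geodesic of `(M,F)` on the parameter set `s` -/
  IsGeodesicOn : (ℝ → M) → Set ℝ → Prop
  geodesic_mono : ∀ γ s t, t ⊆ s → IsGeodesicOn γ s → IsGeodesicOn γ t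

namespace FinslerCartan

variable {M TM0 Tan TTan}
variable (D : FinslerCartan M TM0 Tan TTan)

/-- `ϱ(Xh)`, the section of `π*TM` associated to a vector field on `TM₀`. -/
def rhoVF (Xh : ∀ z, TTan z) : ∀ z, Tan (D.π z) := fun z => D.ρ z (Xh z)

/-- The torsion `τ(Xh,Yh) = ∇_Xh Y − ∇_Yh X − ϱ[Xh,Yh]` of the Cartan connection. -/
def tor (Xh Yh : ∀ z, TTan z) : ∀ z, Tan (D.π z) :=
  fun z => D.cov Xh (D.rhoVF Yh) z - D.cov Yh (D.rhoVF Xh) z - D.ρ z (D.bracket Xh Yh z)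

/-- The covariant derivative `(∇_Zh τ)(Xh,Yh)` of the torsion. -/
def covTor (Zh Xh Yh : ∀ z, TTan z) : ∀ z, Tan (D.π z) :=
  fun z => D.cov Zh (D.tor Xh Yh) z - D.tor (D.covTT Zh Xh) Yh z - D.tor Xh (D.covTT Zh Yh) z

/-- The `hv`-curvature `P(X,Ẏ)Z = Ω(HXh,VYh)Z` of the Cartan connection, as a
tensor on `π*TM`. -/
def Pc (z : TM0) (X Ydot Z : Tan (D.π z)) : Tan (D.π z) :=
  D.curv z (D.hlift z X) (D.vlift z Ydot) Z

/-- `^sP`, the part of the `hv`-curvature symmetric in its last two indices. -/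
def sP (z : TM0) (X Ydot Z : Tan (D.π z)) : Tan (D.π z) :=
  (1 / 2 : ℝ) • (D.Pc z X Ydot Z + D.Pc z Ydot X Z)

/-- `^aP`, the part of the `hv`-curvature antisymmetric in its last two indices. -/
def aP (z : TM0) (X Ydot Z : Tan (D.π z)) : Tan (D.π z) :=
  (1 / 2 : ℝ) • (D.Pc z X Ydot Z - D.Pc z Ydot X Z)

/-- The `vv`-curvature `Q(Ẋ,Ẏ)Z = Ω(VXh,VYh)Z`. -/
def Qc (z : TM0) (Xdot Ydot Z : Tan (D.π z)) : Tan (D.π z) :=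
  D.curv z (D.vlift z Xdot) (D.vlift z Ydot) Z

/-- The `hh`-curvature `R(X,Y)Z = Ω(HXh,HYh)Z`. -/
def Rc (z : TM0) (X Y Z : Tan (D.π z)) : Tan (D.π z) :=
  D.curv z (D.hlift z X) (D.hlift z Y) Z

/-- The tensor `η^k(Xh,Yh)Z = k(g(Y,Z)X − g(X,Z)Y) + ^aP(X,Ẏ)Z`. -/
def etaK (k : ℝ) (z : TM0) (a b : TTan z) (Z : Tan (D.π z)) : Tan (D.π z) :=
  k • (D.g z (D.ρ z b) Z • D.ρ z a - D.g z (D.ρ z a) Z • D.ρ z b)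
    + D.aP z (D.ρ z a) (D.μ z b) Z

/-- The related curvature operator `Ω̄ = Ω − η^k`. -/
def barOmega (k : ℝ) (z : TM0) (a b : TTan z) (Z : Tan (D.π z)) : Tan (D.π z) :=
  D.curv z a b Z - D.etaK k z a b Z

/-- The covariant derivative `(∇_Zh Ω̄)(Xh,Yh)` applied to `W`. -/
def covBarOmega (k : ℝ) (Zh Xh Yh : ∀ z, TTan z) (W : ∀ z, Tan (D.π z)) :
    ∀ z, Tan (D.π z) :=
  fun z => D.cov Zh (fun w => D.barOmega k w (Xh w) (Yh w) (W w)) z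
    - D.barOmega k z (D.covTT Zh Xh z) (Yh z) (W z)
    - D.barOmega k z (Xh z) (D.covTT Zh Yh z) (W z)
    - D.barOmega k z (Xh z) (Yh z) (D.cov Zh W z)

/-- The covariant derivative `(∇_Zh η^k)(Xh,Yh)` applied to `W`. -/
def covEtaK (k : ℝ) (Zh Xh Yh : ∀ z, TTan z) (W : ∀ z, Tan (D.π z)) :
    ∀ z, Tan (D.π z) :=
  fun z => D.cov Zh (fun w => D.etaK k w (Xh w) (Yh w) (W w)) z
    - D.etaK k z (D.covTT Zh Xh z) (Yh z) (W z)
    - D.etaK k z (Xh z) (D.covTT Zh Yh z) (W z)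
    - D.etaK k z (Xh z) (Yh z) (D.cov Zh W z)

/-- The `k`-nullity space `N^k_z ⊆ H_z TM`. -/
def NkSet (k : ℝ) (z : TM0) : Set (TTan z) :=
  {a | a ∈ D.Hor z ∧ ∀ b ∈ D.Hor z, ∀ Z, D.barOmega k z a b Z = 0}

/-- The `k`-nullity space `𝒩^k_x = ϱ(N^k_z) ⊆ T_x M`, recorded at `z` over `x = π z`. -/
def nullity (k : ℝ) (z : TM0) : Set (Tan (D.π z)) := D.ρ z '' D.NkSet k z

/-- The index of `k`-nullity `μ_k = dim 𝒩^k` (at `z`). -/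
def indexNullity (k : ℝ) (z : TM0) : ℕ :=
  Module.finrank ℝ (Submodule.span ℝ (D.nullity k z))

/-- The index of `k`-nullity as a function `μ_k : M → ℕ`. -/
def muK (k : ℝ) (x : M) : ℕ := D.indexNullity k (D.π_surj x).choose

/-- The kernel `ker_x Ω̄` of the related curvature operator. -/
def kerBar (k : ℝ) (z : TM0) : Set (Tan (D.π z)) :=
  {Z | ∀ a ∈ D.Hor z, ∀ b ∈ D.Hor z, D.barOmega k z a b Z = 0}

/-- The co-nullity space `⊥𝒩^k_x`, the `g`-orthogonal complement of `𝒩^k_x`. -/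
def coNullity (k : ℝ) (z : TM0) : Set (Tan (D.π z)) :=
  {W | ∀ X ∈ D.nullity k z, D.g z W X = 0}

/-- The index of `k`-nullity is constant on `U ⊆ M`. -/
def IndexConstantOn (k : ℝ) (U : Set M) : Prop :=
  ∀ z z' : TM0, D.π z ∈ U → D.π z' ∈ U → D.indexNullity k z = D.indexNullity k z'

/-- Geodesic completeness of `(M,F)`: every geodesic defined on `[0,c)` extends
to a geodesic defined on `[0,∞)`. -/
def Complete : Prop :=
  ∀ (γ : ℝ → M) (c : ℝ), 0 < c → D.IsGeodesicOn γ (Set.Ico 0 c) →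
    ∃ γ' : ℝ → M, D.IsGeodesicOn γ' (Set.Ici 0) ∧ ∀ t ∈ Set.Ico (0 : ℝ) c, γ' t = γ t

/-- The flag curvature `K(z, P(v,X)) = g(R(X,v)v,X)/(g(X,X)F² − g(X,v)²)`
computed with the Cartan `hh`-curvature. -/
def flagCurv (z : TM0) (X : Tan (D.π z)) : ℝ :=
  D.g z (D.Rc z X (D.canSec z) (D.canSec z)) X
    / (D.g z X X * (D.F z) ^ 2 - (D.g z X (D.canSec z)) ^ 2)

/-- The flag curvature computed with the Berwald `hh`-curvature `H`. -/
def flagCurvB (z : TM0) (X : Tan (D.π z)) : ℝ :=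
  D.g z (D.curvB z (D.hlift z X) (D.hlift z (D.canSec z)) (D.canSec z)) X
    / (D.g z X X * (D.F z) ^ 2 - (D.g z X (D.canSec z)) ^ 2)

/-- An embedded submanifold `S` of the Finsler manifold `(M,F)`, with its slit
tangent bundle `TS₀ ⊆ TM₀`, its tangent spaces, the `g`-orthogonal (tangential)
projection `P₁`, and the curvature of the induced tangential connection `∇̃`. -/
structure Submanifold where
  /-- the underlying subset of `M` -/
  S : Set M
  S_nonempty : S.Nonempty
  /-- the slit tangent bundle of the submanifold, inside `TM₀` -/
  TS0 : Set TM0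
  TS0_proj : ∀ z ∈ TS0, D.π z ∈ S
  TS0_fiber : ∀ x ∈ S, ∃ z ∈ TS0, D.π z = x
  /-- the tangent space of `S` inside `T_{π z} M` (recorded for `z ∈ TS₀`) -/
  TanS : ∀ z : TM0, Submodule ℝ (Tan (D.π z))
  canSec_mem : ∀ z ∈ TS0, D.canSec z ∈ TanS z
  /-- the tangent space of `TS₀` inside `T_z TM₀` -/
  TTanS : ∀ z : TM0, Submodule ℝ (TTan z)
  ρ_tangent : ∀ z ∈ TS0, ∀ w ∈ TTanS z, D.ρ z w ∈ TanS z
  /-- the tangential projection `P₁ : π*TM → TS`, `g`-orthogonal -/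
  P1 : ∀ z, Tan (D.π z) →ₗ[ℝ] Tan (D.π z)
  P1_mem : ∀ z W, P1 z W ∈ TanS z
  P1_id : ∀ z, ∀ W ∈ TanS z, P1 z W = W
  P1_orth : ∀ z W, ∀ Y ∈ TanS z, D.g z (W - P1 z W) Y = 0
  /-- the curvature operator `Ω̃` of the induced tangential connection `∇̃ = P₁ ∘ ∇`,
  pointwise -/
  curvS : ∀ z, TTan z →ₗ[ℝ] TTan z →ₗ[ℝ] Tan (D.π z) →ₗ[ℝ] Tan (D.π z)
  curvS_spec : ∀ (Xh Yh : ∀ z, TTan z) (Z : ∀ z, Tan (D.π z)) z,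
    curvS z (Xh z) (Yh z) (Z z)
      = P1 z (D.cov Xh (fun w => P1 w (D.cov Yh Z w)) z)
        - P1 z (D.cov Yh (fun w => P1 w (D.cov Xh Z w)) z)
        - P1 z (D.cov (D.bracket Xh Yh) Z z)

namespace Submanifold

variable {D} (N : D.Submanifold)

/-- The normal projection `P₂ = id − P₁`. -/
def P2 (z : TM0) (W : Tan (D.π z)) : Tan (D.π z) := W - N.P1 z W

/-- The second fundamental form `α(Xt,Y) = P₂(∇_Xt Y)` of the submanifold. -/
def sff (Xt : ∀ z, TTan z) (Y : ∀ z, Tan (D.π z)) : ∀ z, Tan (D.π z) :=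
  fun z => N.P2 z (D.cov Xt Y z)

/-- The induced tangential covariant derivative `∇̃_Xt Y = P₁(∇_Xt Y)`. -/
def covS (Xt : ∀ z, TTan z) (Y : ∀ z, Tan (D.π z)) : ∀ z, Tan (D.π z) :=
  fun z => N.P1 z (D.cov Xt Y z)

/-- The submanifold is auto-parallel: its second fundamental form vanishes
identically (on tangential arguments). -/
def IsAutoParallel : Prop :=
  ∀ (Xt : ∀ z, TTan z) (Y : ∀ z, Tan (D.π z)),
    (∀ z ∈ N.TS0, Xt z ∈ N.TTanS z) → (∀ z ∈ N.TS0, Y z ∈ N.TanS z) →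
    ∀ z ∈ N.TS0, N.sff Xt Y z = 0

/-- The submanifold is an integral manifold of the `k`-nullity distribution:
its tangent spaces are the `k`-nullity spaces. -/
def IsIntegralOfNullity (k : ℝ) : Prop :=
  ∀ z ∈ N.TS0, (N.TanS z : Set (Tan (D.π z))) = D.nullity k z

end Submanifold

end FinslerCartan

/-- **Theorem 3, second part (constant flag curvature `k`).**
If the `k`-nullity space is locally constant on the open subset `U` of `M`,
then every integral manifold `N` of the `k`-nullity distribution in `U`, with
the induced Finsler structure, has constant flag curvature `k`: its
`hh`-curvature satisfies `R̃(X,v)v = k(F̃² X − g̃(X,v) v)`, equivalently every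
flag curvature equals `k`. -/
theorem integral_manifold_constant_flag_curvature
    (D : FinslerCartan M TM0 Tan TTan) (k : ℝ) (hk : 0 ≤ k)
    (U : Set M) (hU : IsOpen U)
    (hconst : D.IndexConstantOn k U)
    (N : D.Submanifold) (hNU : N.S ⊆ U)
    (hint : N.IsIntegralOfNullity k) :
    (∀ z ∈ N.TS0, ∀ X ∈ N.TanS z,
      N.curvS z (D.hlift z X) (D.hlift z (D.canSec z)) (D.canSec z)
        = k • ((D.F z) ^ 2 • X - D.g z X (D.canSec z) • D.canSec z))
    ∧ ∀ z ∈ N.TS0, ∀ X ∈ N.TanS z, LinearIndependent ℝ ![X, D.canSec z] →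
        D.g z (N.curvS z (D.hlift z X) (D.hlift z (D.canSec z)) (D.canSec z)) X
          / (D.g z X X * (D.F z) ^ 2 - (D.g z X (D.canSec z)) ^ 2) = k := by
  classical
  have key : ∀ z ∈ N.TS0, ∀ X ∈ N.TanS z,
      N.curvS z (D.hlift z X) (D.hlift z (D.canSec z)) (D.canSec z)
        = k • ((D.F z) ^ 2 • X - D.g z X (D.canSec z) • D.canSec z) := by
    intro z hz X hX
    -- the horizontal lift of the canonical section is the spray
    have hsprayH : D.hlift z (D.canSec z) = D.spray z := by
      have h := D.hlift_ρ z (D.spray z) (D.spray_hor z)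
      rw [D.spray_ρ] at h
      exact h
    -- `hlift z X` lies in the nullity set
    have hXnull : X ∈ D.nullity k z := by
      rw [← hint z hz]; exact hX
    obtain ⟨a, ha, haX⟩ := hXnull
    have haH : a ∈ D.Hor z := ha.1
    have hla : D.hlift z X = a := by
      rw [← haX]; exact D.hlift_ρ z a haH
    -- μ vanishes on the spray
    have hμs : D.μ z (D.spray z) = 0 :=
      LinearMap.mem_ker.mp ((D.hor_eq_ker_μ z) ▸ D.spray_hor z)
    -- the Cartan hh-curvature on nullity vectors
    have hcurv : D.curv z (D.hlift z X) (D.spray z) (D.canSec z)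
        = k • ((D.F z) ^ 2 • X - D.g z X (D.canSec z) • D.canSec z) := by
      have h0 : D.barOmega k z a (D.spray z) (D.canSec z) = 0 :=
        ha.2 (D.spray z) (D.spray_hor z) (D.canSec z)
      unfold FinslerCartan.barOmega at h0
      have h1 : D.curv z a (D.spray z) (D.canSec z)
          = D.etaK k z a (D.spray z) (D.canSec z) := sub_eq_zero.mp h0
      have haP : D.aP z (D.ρ z a) (0 : Tan (D.π z)) (D.canSec z) = 0 := by
        simp [FinslerCartan.aP, FinslerCartan.Pc]
      have hek : D.etaK k z a (D.spray z) (D.canSec z)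
          = k • ((D.F z) ^ 2 • X - D.g z X (D.canSec z) • D.canSec z) := by
        unfold FinslerCartan.etaK
        rw [D.spray_ρ, hμs, haP, add_zero, D.g_canSec, haX]
      rw [hla, h1, hek]
    -- a vector field through `hlift z X`
    let Xh : ∀ w, TTan w := fun w => if h : z = w then h ▸ D.hlift z X else 0
    have hXhz : Xh z = D.hlift z X := dif_pos rfl
    have hXhH : ∀ w, Xh w ∈ D.Hor w := by
      intro w
      by_cases h : z = w
      · subst h
        rw [hXhz]; exact D.hlift_mem z X
      · have h0 : Xh w = 0 := dif_neg h
        rw [h0]; exact (D.Hor w).zero_mem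
    -- the relevant covariant derivatives vanish identically
    have hcovXh : ∀ w, D.cov Xh D.canSec w = 0 := by
      intro w
      rw [← D.μ_spec Xh w]
      exact LinearMap.mem_ker.mp ((D.hor_eq_ker_μ w) ▸ hXhH w)
    have hcovSp : ∀ w, D.cov D.spray D.canSec w = 0 := by
      intro w
      rw [← D.μ_spec D.spray w]
      exact LinearMap.mem_ker.mp ((D.hor_eq_ker_μ w) ▸ D.spray_hor w)
    have e1 : (fun w => N.P1 w (D.cov D.spray D.canSec w)) = D.cov D.spray D.canSec := by
      funext w; rw [hcovSp w, map_zero]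
    have e2 : (fun w => N.P1 w (D.cov Xh D.canSec w)) = D.cov Xh D.canSec := by
      funext w; rw [hcovXh w, map_zero]
    have hS := N.curvS_spec Xh D.spray D.canSec z
    rw [e1, e2] at hS
    have hC := D.curv_spec Xh D.spray D.canSec z
    rw [hsprayH, ← hXhz, hS, ← map_sub, ← map_sub, ← hC, hXhz, hcurv]
    exact N.P1_id z _ (Submodule.smul_mem _ _ (Submodule.sub_mem _
      (Submodule.smul_mem _ _ hX)
      (Submodule.smul_mem _ _ (N.canSec_mem z hz))))
  refine ⟨key, ?_⟩
  intro z hz X hX hind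
  rw [key z hz X hX]
  have hF := D.F_pos z
  have hsymm : D.g z (D.canSec z) X = D.g z X (D.canSec z) := D.g_symm z (D.canSec z) X
  have hgvv : D.g z (D.canSec z) (D.canSec z) = (D.F z) ^ 2 := D.g_canSec z
  have hW : (D.F z) ^ 2 • X - D.g z X (D.canSec z) • D.canSec z ≠ 0 := by
    intro h0
    have hsum : ∑ i : Fin 2,
        (![(D.F z) ^ 2, -(D.g z X (D.canSec z))]) i • (![X, D.canSec z]) i = 0 := by
      rw [Fin.sum_univ_two]
      simp only [Matrix.cons_val_zero, Matrix.cons_val_one, Matrix.head_cons, neg_smul]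
      rw [← sub_eq_add_neg]
      exact h0
    have hli := Fintype.linearIndependent_iff.mp hind
      ![(D.F z) ^ 2, -(D.g z X (D.canSec z))] hsum 0
    have h2 : (D.F z) ^ 2 = 0 := by simpa using hli
    nlinarith [hF]
  have hpos := D.g_posdef z _ hW
  have hexp : D.g z ((D.F z) ^ 2 • X - D.g z X (D.canSec z) • D.canSec z)
      ((D.F z) ^ 2 • X - D.g z X (D.canSec z) • D.canSec z)
      = (D.F z) ^ 2 * (D.g z X X * (D.F z) ^ 2 - (D.g z X (D.canSec z)) ^ 2) := by
    simp only [map_sub, map_smul, LinearMap.sub_apply, LinearMap.smul_apply,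
      smul_eq_mul, hsymm, hgvv]
    ring
  rw [hexp] at hpos
  have hden : 0 < D.g z X X * (D.F z) ^ 2 - (D.g z X (D.canSec z)) ^ 2 := by
    have hF2 : 0 < (D.F z) ^ 2 := by positivity
    nlinarith
  have hnum : D.g z (k • ((D.F z) ^ 2 • X - D.g z X (D.canSec z) • D.canSec z)) X
      = k * (D.g z X X * (D.F z) ^ 2 - (D.g z X (D.canSec z)) ^ 2) := by
    simp only [map_smul, map_sub, LinearMap.smul_apply, LinearMap.sub_apply,
      smul_eq_mul, hsymm]
    ring
  rw [hnum, mul_div_assoc, div_self (ne_of_gt hden), mul_one]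


end
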